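/- Fix T > 0 and suppose v : ℝ₊ × ℝ × [0,T] → ℝ is smooth with finite norms E(t)² = Σ_{k=0}^{2} (1+t)^k ‖∂_y^k v(t)‖²_{H^{3−k}} and D(t)² = Σ_{k=0}^{2} (1+t)^k ‖∂_y^k ∇v(t)‖²_{H^{2−k}}. Then there is a universal constant C such that for all t ∈ [0,T]: (i) ‖∂_y v(t)‖_{L^∞} ≤ C·D(t)·(1+t)^{−1/2}, and (ii) ‖∂_y v(t)‖_{L^∞} ≤ C·E(t)·(1+t)^{−3/4}. -/

import Mathlib

open Set MeasureTheory

section Aux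

variable {α : Type*} [MeasurableSpace α] {μ : Measure α}

/-- Cauchy–Schwarz for integrals. -/
lemma integral_abs_mul_le {f g : α → ℝ} (hf : AEStronglyMeasurable f μ)
    (hg : AEStronglyMeasurable g μ) (hf2 : Integrable (fun a => f a ^ 2) μ)
    (hg2 : Integrable (fun a => g a ^ 2) μ) :
    ∫ a, |f a * g a| ∂μ ≤ Real.sqrt (∫ a, f a ^ 2 ∂μ) * Real.sqrt (∫ a, g a ^ 2 ∂μ) := by
  have hpq : Real.HolderConjugate 2 2 := Real.HolderConjugate.two_two
  have hfm : MemLp (fun a => |f a|) (ENNReal.ofReal 2) μ := by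
    rw [(by norm_num : ENNReal.ofReal 2 = 2)]
    exact (memLp_two_iff_integrable_sq
      (by simpa using hf.norm : AEStronglyMeasurable (fun a => |f a|) μ)).2
      (by simpa [sq_abs] using hf2)
  have hgm : MemLp (fun a => |g a|) (ENNReal.ofReal 2) μ := by
    rw [(by norm_num : ENNReal.ofReal 2 = 2)]
    exact (memLp_two_iff_integrable_sq
      (by simpa using hg.norm : AEStronglyMeasurable (fun a => |g a|) μ)).2
      (by simpa [sq_abs] using hg2)
  have h := integral_mul_le_Lp_mul_Lq_of_nonneg hpq
    (Filter.Eventually.of_forall (fun a => abs_nonneg (f a)))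
    (Filter.Eventually.of_forall (fun a => abs_nonneg (g a))) hfm hgm
  have e1 : ∀ a, |f a * g a| = |f a| * |g a| := fun a => abs_mul _ _
  have e2 : (∫ a, |f a| ^ (2:ℝ) ∂μ) = ∫ a, f a ^ 2 ∂μ := by
    congr 1; ext a
    rw [show |f a| ^ (2:ℝ) = |f a| ^ (2:ℕ) from Real.rpow_natCast _ 2, sq_abs]
  have e3 : (∫ a, |g a| ^ (2:ℝ) ∂μ) = ∫ a, g a ^ 2 ∂μ := by
    congr 1; ext a
    rw [show |g a| ^ (2:ℝ) = |g a| ^ (2:ℕ) from Real.rpow_natCast _ 2, sq_abs]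
  calc ∫ a, |f a * g a| ∂μ = ∫ a, |f a| * |g a| ∂μ := by simp_rw [e1]
    _ ≤ (∫ a, |f a| ^ (2:ℝ) ∂μ) ^ ((1:ℝ)/2) * (∫ a, |g a| ^ (2:ℝ) ∂μ) ^ ((1:ℝ)/2) := h
    _ = Real.sqrt (∫ a, f a ^ 2 ∂μ) * Real.sqrt (∫ a, g a ^ 2 ∂μ) := by
        rw [e2, e3, ← Real.sqrt_eq_rpow, ← Real.sqrt_eq_rpow]

/-- On a set of infinite measure, an integrable nonneg function takes small values. -/
lemma exists_lt_of_integrableOn {f : α → ℝ} {S : Set α} (hS : μ S = ⊤)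
    (hf : IntegrableOn f S μ) {ε : ℝ} (hε : 0 < ε) : ∃ z ∈ S, f z < ε := by
  by_contra h
  push_neg at h
  have hsub : S ⊆ {x | ε ≤ f x} := fun x hx => h x hx
  have hlt : μ.restrict S {x | ε ≤ f x} < ⊤ := hf.measure_ge_lt_top hε
  rw [Measure.restrict_apply_superset hsub, hS] at hlt
  exact (lt_irrefl _ hlt)

lemma integrable_abs_two_mul {F G : α → ℝ}
    (hFm : AEStronglyMeasurable F μ) (hGm : AEStronglyMeasurable G μ)
    (hF2 : Integrable (fun a => F a ^ 2) μ) (hG2 : Integrable (fun a => G a ^ 2) μ) :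
    Integrable (fun a => |2 * F a * G a|) μ := by
  refine Integrable.mono (hF2.add hG2) ((hFm.const_mul 2).mul hGm).norm ?_
  refine Filter.Eventually.of_forall (fun a => ?_)
  have h1 : |2 * F a * G a| ≤ F a ^ 2 + G a ^ 2 := by
    have : 2 * |F a| * |G a| ≤ F a ^ 2 + G a ^ 2 := by
      nlinarith [sq_abs (F a), sq_abs (G a), sq_nonneg (|F a| - |G a|)]
    calc |2 * F a * G a| = 2 * |F a| * |G a| := by rw [abs_mul, abs_mul]; norm_num
      _ ≤ _ := this
  have h2 : (0:ℝ) ≤ F a ^ 2 + G a ^ 2 := by positivity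
  simpa [Real.norm_eq_abs, abs_of_nonneg h2, abs_abs] using h1

lemma integral_abs_two_mul_le {F G : α → ℝ}
    (hFm : AEStronglyMeasurable F μ) (hGm : AEStronglyMeasurable G μ)
    (hF2 : Integrable (fun a => F a ^ 2) μ) (hG2 : Integrable (fun a => G a ^ 2) μ) :
    ∫ a, |2 * F a * G a| ∂μ ≤
      2 * Real.sqrt (∫ a, F a ^ 2 ∂μ) * Real.sqrt (∫ a, G a ^ 2 ∂μ) := by
  have hcs := integral_abs_mul_le hFm hGm hF2 hG2
  calc ∫ a, |2 * F a * G a| ∂μ = ∫ a, 2 * |F a * G a| ∂μ := by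
        congr 1; ext a; rw [mul_assoc, abs_mul]; norm_num
    _ = 2 * ∫ a, |F a * G a| ∂μ := by rw [integral_const_mul]
    _ ≤ 2 * (Real.sqrt (∫ a, F a ^ 2 ∂μ) * Real.sqrt (∫ a, G a ^ 2 ∂μ)) := by linarith
    _ = _ := by ring

/-- 1D Agmon inequality on an order-connected set of infinite measure. -/
lemma agmon1 {S : Set ℝ} (hS : S.OrdConnected) (hvol : volume S = ⊤)
    {h h' : ℝ → ℝ} (hd : ∀ x, HasDerivAt h (h' x) x) (hc' : Continuous h')
    (hI : IntegrableOn (fun x => h x ^ 2) S) (hJ : IntegrableOn (fun x => h' x ^ 2) S) :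
    ∀ y ∈ S, h y ^ 2 ≤
      2 * Real.sqrt (∫ x in S, h x ^ 2) * Real.sqrt (∫ x in S, h' x ^ 2) := by
  intro y hy
  have hc : Continuous h := by
    have : Differentiable ℝ h := fun x => (hd x).differentiableAt
    exact this.continuous
  have hcont2 : Continuous (fun x => 2 * h x * h' x) :=
    ((continuous_const.mul hc).mul hc')
  have hint2 : IntegrableOn (fun x => |2 * h x * h' x|) S :=
    integrable_abs_two_mul hc.aestronglyMeasurable hc'.aestronglyMeasurable hI hJ
  refine le_of_forall_pos_le_add (fun ε hε => ?_)
  obtain ⟨z, hzS, hz⟩ := exists_lt_of_integrableOn hvol hI hε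
  have key : h y ^ 2 - h z ^ 2 = ∫ x in z..y, 2 * h x * h' x := by
    rw [intervalIntegral.integral_eq_sub_of_hasDerivAt
      (fun x _ => by simpa [mul_comm, mul_assoc, pow_one] using (hd x).pow 2)
      (hcont2.intervalIntegrable z y)]; rfl
  have habs : |∫ x in z..y, 2 * h x * h' x| ≤ ∫ x in S, |2 * h x * h' x| := by
    have h1 : ‖∫ x in z..y, 2 * h x * h' x‖ ≤ ∫ x in Set.uIoc z y, ‖2 * h x * h' x‖ :=
      intervalIntegral.norm_integral_le_integral_norm_uIoc
    simp only [Real.norm_eq_abs] at h1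
    refine le_trans h1 ?_
    refine setIntegral_mono_set hint2
      (Filter.Eventually.of_forall (fun x => abs_nonneg _)) (HasSubset.Subset.eventuallyLE ?_)
    exact Set.Ioc_subset_Icc_self.trans (hS.uIcc_subset hzS hy)
  have hCS : ∫ x in S, |2 * h x * h' x|
      ≤ 2 * Real.sqrt (∫ x in S, h x ^ 2) * Real.sqrt (∫ x in S, h' x ^ 2) :=
    integral_abs_two_mul_le hc.aestronglyMeasurable hc'.aestronglyMeasurable hI hJ
  calc h y ^ 2 = h z ^ 2 + (h y ^ 2 - h z ^ 2) := by ring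
    _ ≤ ε + |∫ x in z..y, 2 * h x * h' x| := by
        rw [key]; exact add_le_add hz.le (le_abs_self _)
    _ ≤ ε + (2 * Real.sqrt (∫ x in S, h x ^ 2) * Real.sqrt (∫ x in S, h' x ^ 2)) := by
        exact add_le_add_right (habs.trans hCS) _
    _ = _ := by ring

end Aux

noncomputable def pdx (f : ℝ × ℝ → ℝ) (p : ℝ × ℝ) : ℝ := fderiv ℝ f p (1, 0)
noncomputable def pdy (f : ℝ × ℝ → ℝ) (p : ℝ × ℝ) : ℝ := fderiv ℝ f p (0, 1)

lemma hasDerivAt_pdx {f : ℝ × ℝ → ℝ} (hf : ContDiff ℝ (⊤ : ℕ∞) f) (x y : ℝ) :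
    HasDerivAt (fun s => f (s, y)) (pdx f (x, y)) x := by
  have h := (hf.differentiable (by simp) (x, y)).hasFDerivAt
  have hline : HasDerivAt (fun s : ℝ => (s, y)) ((1:ℝ), (0:ℝ)) x := by
    simpa using (hasDerivAt_id x).prodMk (hasDerivAt_const x y)
  exact h.comp_hasDerivAt x hline

lemma hasDerivAt_pdy {f : ℝ × ℝ → ℝ} (hf : ContDiff ℝ (⊤ : ℕ∞) f) (x y : ℝ) :
    HasDerivAt (fun s => f (x, s)) (pdy f (x, y)) y := by
  have h := (hf.differentiable (by simp) (x, y)).hasFDerivAt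
  have hline : HasDerivAt (fun s : ℝ => (x, s)) ((0:ℝ), (1:ℝ)) y := by
    simpa using (hasDerivAt_const y x).prodMk (hasDerivAt_id y)
  exact h.comp_hasDerivAt y hline

lemma contDiff_pdx {f : ℝ × ℝ → ℝ} (hf : ContDiff ℝ (⊤ : ℕ∞) f) : ContDiff ℝ (⊤ : ℕ∞) (pdx f) := by
  have h : ContDiff ℝ (⊤ : ℕ∞) (fderiv ℝ f) := hf.fderiv_right (by simp)
  exact h.clm_apply contDiff_const

lemma contDiff_pdy {f : ℝ × ℝ → ℝ} (hf : ContDiff ℝ (⊤ : ℕ∞) f) : ContDiff ℝ (⊤ : ℕ∞) (pdy f) := by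
  have h : ContDiff ℝ (⊤ : ℕ∞) (fderiv ℝ f) := hf.fderiv_right (by simp)
  exact h.clm_apply contDiff_const

lemma measure_restrict_conv (s : Set ℝ) :
    volume.restrict (s ×ˢ (univ : Set ℝ)) = (volume.restrict s).prod volume := by
  rw [Measure.volume_eq_prod, ← Measure.prod_restrict, Measure.restrict_univ]

/-- Outer one-dimensional Agmon step: bound on `∫ y, u (x, y)^2`. -/
lemma outer_step {u : ℝ × ℝ → ℝ} (hu : ContDiff ℝ (⊤ : ℕ∞) u)
    (h0 : IntegrableOn (fun q => u q ^ 2) (Ioi (0:ℝ) ×ˢ (univ : Set ℝ)))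
    (h1 : IntegrableOn (fun q => pdx u q ^ 2) (Ioi (0:ℝ) ×ˢ (univ : Set ℝ))) :
    ∀ x ∈ Ioi (0:ℝ), Integrable (fun y => u (x, y) ^ 2) volume →
      (∫ y, u (x, y) ^ 2) ≤
        2 * Real.sqrt (∫ q in Ioi (0:ℝ) ×ˢ (univ : Set ℝ), u q ^ 2)
          * Real.sqrt (∫ q in Ioi (0:ℝ) ×ˢ (univ : Set ℝ), pdx u q ^ 2) := by
  intro x hx hslice
  set Ω : Set (ℝ × ℝ) := Ioi (0:ℝ) ×ˢ (univ : Set ℝ) with hΩ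
  set ρ : Measure ℝ := volume.restrict (Ioi (0:ℝ)) with hρ
  have hcu : Continuous u := hu.continuous
  have hcux : Continuous (pdx u) := (contDiff_pdx hu).continuous
  set W : ℝ × ℝ → ℝ := fun q => |2 * u q * pdx u q| with hWdef
  have hW : IntegrableOn W Ω :=
    integrable_abs_two_mul hcu.aestronglyMeasurable hcux.aestronglyMeasurable h0 h1
  have hWcs : ∫ q in Ω, W q ≤
      2 * Real.sqrt (∫ q in Ω, u q ^ 2) * Real.sqrt (∫ q in Ω, pdx u q ^ 2) :=
    integral_abs_two_mul_le hcu.aestronglyMeasurable hcux.aestronglyMeasurable h0 h1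
  have hconv : volume.restrict Ω = ρ.prod volume := measure_restrict_conv _
  have h0' : Integrable (fun q : ℝ × ℝ => u q ^ 2) (ρ.prod volume) := by
    rw [← hconv]; exact h0
  have hae : ∀ᵐ s ∂ρ, Integrable (fun y => u (s, y) ^ 2) volume := h0'.prod_right_ae
  have hA2int : Integrable (fun s => ∫ y, u (s, y) ^ 2) ρ := h0'.integral_prod_left
  refine le_of_forall_pos_le_add (fun ε hε => ?_)
  obtain ⟨N, hNsub, hNm, hNnull⟩ :=
    exists_measurable_superset_of_null (ae_iff.mp hae)
  have hSm : MeasurableSet (Ioi x \ N) := measurableSet_Ioi.diff hNm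
  have hSvol : ρ (Ioi x \ N) = ⊤ := by
    rw [measure_diff_null hNnull, hρ, Measure.restrict_apply measurableSet_Ioi,
      Set.inter_eq_left.mpr (Ioi_subset_Ioi hx.le), Real.volume_Ioi]
  obtain ⟨z, hzS, hzlt⟩ := exists_lt_of_integrableOn (μ := ρ) hSvol hA2int.integrableOn hε
  have hxz : x ≤ z := (mem_Ioi.mp hzS.1).le
  have hz0 : Integrable (fun y => u (z, y) ^ 2) volume := by
    by_contra hcon
    exact hzS.2 (hNsub hcon)
  have hftc : ∀ y, u (z, y) ^ 2 - u (x, y) ^ 2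
      = ∫ s in x..z, 2 * u (s, y) * pdx u (s, y) := by
    intro y
    have hcont : Continuous fun s => 2 * u (s, y) * pdx u (s, y) := by
      have hline : Continuous fun s : ℝ => (s, y) := continuous_id.prodMk continuous_const
      exact (continuous_const.mul (hcu.comp hline)).mul (hcux.comp hline)
    rw [intervalIntegral.integral_eq_sub_of_hasDerivAt
      (fun s _ => by simpa [mul_comm, mul_assoc, pow_one]
        using (hasDerivAt_pdx hu s y).pow 2)
      (hcont.intervalIntegrable x z)]; rfl
  set φ : ℝ → ℝ := fun y => ∫ s in x..z, 2 * u (s, y) * pdx u (s, y) with hφdef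
  have hφ_eq : ∀ y, φ y = u (z, y) ^ 2 - u (x, y) ^ 2 := fun y => (hftc y).symm
  have hφint : Integrable φ volume := by
    have := hz0.sub hslice
    exact this.congr (Filter.Eventually.of_forall (fun y => (hφ_eq y).symm))
  have hsplit : (∫ y, u (x, y) ^ 2) = (∫ y, u (z, y) ^ 2) - ∫ y, φ y := by
    have hpt : ∀ y, u (x, y) ^ 2 = u (z, y) ^ 2 - φ y := by
      intro y; rw [hφ_eq y]; ring
    calc (∫ y, u (x, y) ^ 2) = ∫ y, (u (z, y) ^ 2 - φ y) := by
          exact integral_congr_ae (Filter.Eventually.of_forall hpt)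
      _ = _ := integral_sub hz0 hφint
  set ψ : ℝ → ℝ := fun y => ∫ s in Ioc x z, W (s, y) with hψdef
  have hWxz : IntegrableOn W (Ioc x z ×ˢ (univ : Set ℝ)) := by
    refine hW.mono_set (Set.prod_mono ?_ subset_rfl)
    exact fun s hs => lt_trans hx hs.1
  have hconv2 : volume.restrict (Ioc x z ×ˢ (univ : Set ℝ))
      = (volume.restrict (Ioc x z)).prod volume := measure_restrict_conv _
  have hW' : Integrable W ((volume.restrict (Ioc x z)).prod volume) := by
    rw [← hconv2]; exact hWxz
  have hψint : Integrable ψ volume := hW'.integral_prod_right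
  have hφle : ∀ y, |φ y| ≤ ψ y := by
    intro y
    have h1 : ‖∫ s in x..z, 2 * u (s, y) * pdx u (s, y)‖
        ≤ ∫ s in Set.uIoc x z, ‖2 * u (s, y) * pdx u (s, y)‖ :=
      intervalIntegral.norm_integral_le_integral_norm_uIoc
    rw [Set.uIoc_of_le hxz] at h1
    exact h1
  have hbound : |∫ y, φ y| ≤ ∫ y, ψ y := by
    exact norm_integral_le_of_norm_le (f := φ) hψint
      (Filter.Eventually.of_forall (fun y => hφle y))
  have hψval : ∫ y, ψ y = ∫ q in Ioc x z ×ˢ (univ : Set ℝ), W q := by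
    calc ∫ y, ψ y = ∫ q, W q ∂((volume.restrict (Ioc x z)).prod volume) :=
          (integral_prod_symm W hW').symm
      _ = _ := by rw [hconv2]
  have hmono : ∫ q in Ioc x z ×ˢ (univ : Set ℝ), W q ≤ ∫ q in Ω, W q := by
    refine setIntegral_mono_set hW
      (Filter.Eventually.of_forall (fun q => abs_nonneg _)) ?_
    refine HasSubset.Subset.eventuallyLE (Set.prod_mono ?_ subset_rfl)
    exact fun s hs => lt_trans hx hs.1
  calc (∫ y, u (x, y) ^ 2) = (∫ y, u (z, y) ^ 2) - ∫ y, φ y := hsplit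
    _ ≤ ε + |∫ y, φ y| := by
        have := le_abs_self (- ∫ y, φ y)
        rw [abs_neg] at this
        linarith
    _ ≤ ε + ∫ q in Ω, W q := by
        refine add_le_add_right (hbound.trans ?_) _
        rw [hψval]; exact hmono
    _ ≤ _ := by
        rw [add_comm]; exact add_le_add_left hWcs ε

lemma two_sqrt_mul (x y u v : ℝ) :
    2 * Real.sqrt (2 * x * y) * Real.sqrt (2 * u * v)
      = 4 * Real.sqrt (x * y) * Real.sqrt (u * v) := by
  have h22 : Real.sqrt 2 * Real.sqrt 2 = 2 := Real.mul_self_sqrt (by norm_num)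
  rw [mul_assoc 2 x y, mul_assoc 2 u v, Real.sqrt_mul (by norm_num : (0:ℝ) ≤ 2),
    Real.sqrt_mul (by norm_num : (0:ℝ) ≤ 2)]
  linear_combination 2 * Real.sqrt (x * y) * Real.sqrt (u * v) * h22

/-- Anisotropic Agmon inequality on the half plane. -/
lemma agmon2 {g : ℝ × ℝ → ℝ} (hg : ContDiff ℝ (⊤ : ℕ∞) g)
    (h0 : IntegrableOn (fun q => g q ^ 2) (Ioi (0:ℝ) ×ˢ (univ : Set ℝ)))
    (h1 : IntegrableOn (fun q => pdx g q ^ 2) (Ioi (0:ℝ) ×ˢ (univ : Set ℝ)))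
    (h2 : IntegrableOn (fun q => pdy g q ^ 2) (Ioi (0:ℝ) ×ˢ (univ : Set ℝ)))
    (h3 : IntegrableOn (fun q => pdx (pdy g) q ^ 2) (Ioi (0:ℝ) ×ˢ (univ : Set ℝ))) :
    ∀ q : ℝ × ℝ, 0 < q.1 →
      g q ^ 2 ≤ 4 * Real.sqrt (Real.sqrt (∫ q in Ioi (0:ℝ) ×ˢ (univ : Set ℝ), g q ^ 2)
          * Real.sqrt (∫ q in Ioi (0:ℝ) ×ˢ (univ : Set ℝ), pdx g q ^ 2))
        * Real.sqrt (Real.sqrt (∫ q in Ioi (0:ℝ) ×ˢ (univ : Set ℝ), pdy g q ^ 2)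
          * Real.sqrt (∫ q in Ioi (0:ℝ) ×ˢ (univ : Set ℝ), pdx (pdy g) q ^ 2)) := by
  set Ω : Set (ℝ × ℝ) := Ioi (0:ℝ) ×ˢ (univ : Set ℝ) with hΩ
  set ρ : Measure ℝ := volume.restrict (Ioi (0:ℝ)) with hρ
  set a : ℝ := 2 * Real.sqrt (∫ q in Ω, g q ^ 2) * Real.sqrt (∫ q in Ω, pdx g q ^ 2) with ha
  set b : ℝ := 2 * Real.sqrt (∫ q in Ω, pdy g q ^ 2)
      * Real.sqrt (∫ q in Ω, pdx (pdy g) q ^ 2) with hb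
  set M : ℝ := 4 * Real.sqrt (Real.sqrt (∫ q in Ω, g q ^ 2)
      * Real.sqrt (∫ q in Ω, pdx g q ^ 2))
    * Real.sqrt (Real.sqrt (∫ q in Ω, pdy g q ^ 2)
      * Real.sqrt (∫ q in Ω, pdx (pdy g) q ^ 2)) with hM
  have hab : 2 * Real.sqrt a * Real.sqrt b = M := by
    rw [ha, hb, hM, two_sqrt_mul]
  have hconv : volume.restrict Ω = ρ.prod volume := measure_restrict_conv _
  have h0' : Integrable (fun q : ℝ × ℝ => g q ^ 2) (ρ.prod volume) := by
    rw [← hconv]; exact h0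
  have h2' : Integrable (fun q : ℝ × ℝ => pdy g q ^ 2) (ρ.prod volume) := by
    rw [← hconv]; exact h2
  have hgood : ∀ᵐ x ∂ρ, ∀ y, g (x, y) ^ 2 ≤ M := by
    filter_upwards [h0'.prod_right_ae, h2'.prod_right_ae,
      ae_restrict_mem measurableSet_Ioi] with x hx0 hx2 hxmem
    intro y
    have hinner : g (x, y) ^ 2 ≤ 2 * Real.sqrt (∫ y', g (x, y') ^ 2)
        * Real.sqrt (∫ y', pdy g (x, y') ^ 2) := by
      have hline : Continuous fun s : ℝ => (x, s) := continuous_const.prodMk continuous_id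
      have := agmon1 (S := (univ : Set ℝ)) Set.ordConnected_univ
        (by simp) (h := fun s => g (x, s)) (h' := fun s => pdy g (x, s))
        (fun s => hasDerivAt_pdy hg x s)
        ((contDiff_pdy hg).continuous.comp hline)
        (by simpa using hx0) (by simpa using hx2) y (mem_univ y)
      simpa using this
    have houter0 : (∫ y', g (x, y') ^ 2) ≤ a := outer_step hg h0 h1 x hxmem hx0
    have houter2 : (∫ y', pdy g (x, y') ^ 2) ≤ b :=
      outer_step (contDiff_pdy hg) h2 h3 x hxmem hx2
    have hs0 : Real.sqrt (∫ y', g (x, y') ^ 2) ≤ Real.sqrt a := Real.sqrt_le_sqrt houter0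
    have hs2 : Real.sqrt (∫ y', pdy g (x, y') ^ 2) ≤ Real.sqrt b := Real.sqrt_le_sqrt houter2
    calc g (x, y) ^ 2 ≤ 2 * Real.sqrt (∫ y', g (x, y') ^ 2)
          * Real.sqrt (∫ y', pdy g (x, y') ^ 2) := hinner
      _ ≤ 2 * Real.sqrt a * Real.sqrt b := by
          have := Real.sqrt_nonneg (∫ y', pdy g (x, y') ^ 2)
          have := Real.sqrt_nonneg (∫ y', g (x, y') ^ 2)
          have := Real.sqrt_nonneg a
          nlinarith
      _ = M := hab
  have hall : ∀ q : ℝ × ℝ, q ∈ Ω → g q ^ 2 ≤ M := by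
    by_contra hcon
    push_neg at hcon
    obtain ⟨q0, hq0Ω, hq0⟩ := hcon
    have hUopen : IsOpen ({q : ℝ × ℝ | M < g q ^ 2} ∩ Ω) := by
      refine IsOpen.inter ?_ (isOpen_Ioi.prod isOpen_univ)
      exact isOpen_lt continuous_const ((hg.continuous).pow 2)
    have hUpos : 0 < volume ({q : ℝ × ℝ | M < g q ^ 2} ∩ Ω) :=
      hUopen.measure_pos volume ⟨q0, hq0, hq0Ω⟩
    obtain ⟨N, hNsub, hNm, hNnull⟩ := exists_measurable_superset_of_null (ae_iff.mp hgood)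
    have hNvol : volume (N ∩ Ioi (0:ℝ)) = 0 := by
      rw [← Measure.restrict_apply hNm]; exact hNnull
    have hUsub : {q : ℝ × ℝ | M < g q ^ 2} ∩ Ω ⊆ (N ∩ Ioi (0:ℝ)) ×ˢ (univ : Set ℝ) := by
      rintro ⟨qx, qy⟩ ⟨hq1, hq2⟩
      refine ⟨⟨?_, hq2.1⟩, trivial⟩
      by_contra hqx
      have hbd : ∀ y, g (qx, y) ^ 2 ≤ M := by
        by_contra hbad
        exact hqx (hNsub hbad)
      exact absurd hq1 (not_lt.mpr (hbd qy))
    have hz : volume ({q : ℝ × ℝ | M < g q ^ 2} ∩ Ω) = 0 := by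
      refine measure_mono_null hUsub ?_
      rw [Measure.volume_eq_prod, Measure.prod_prod, hNvol, zero_mul]
    exact absurd hz hUpos.ne'
  intro q hq
  exact hall q ⟨hq, trivial⟩

/-- The squared Sobolev `H^m` norm over `ℝ₊ × ℝ`, as the sum of the squared `L²` norms
of all partial derivatives `∂_x^i ∂_y^j` with `i + j ≤ m`. -/
noncomputable def sobSq (m : ℕ) (f : ℝ × ℝ → ℝ) : ℝ :=
  ∑ i ∈ Finset.range (m + 1), ∑ j ∈ Finset.range (m + 1 - i),
    ∫ q in Ioi (0 : ℝ) ×ˢ (univ : Set ℝ), (pdx^[i] (pdy^[j] f) q) ^ 2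

/-- The time weighted energy norm `E(t)² = Σ_{k=0}^{2} (1+t)^k ‖∂_y^k v(t)‖²_{H^{3−k}}`. -/
noncomputable def Ewt (v : ℝ → ℝ × ℝ → ℝ) (t : ℝ) : ℝ :=
  Real.sqrt (∑ k ∈ Finset.range 3, (1 + t) ^ k * sobSq (3 - k) (pdy^[k] (v t)))

/-- The dissipation norm `D(t)² = Σ_{k=0}^{2} (1+t)^k ‖∂_y^k ∇v(t)‖²_{H^{2−k}}`. -/
noncomputable def Dwt (v : ℝ → ℝ × ℝ → ℝ) (t : ℝ) : ℝ :=
  Real.sqrt (∑ k ∈ Finset.range 3, (1 + t) ^ k *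
    (sobSq (2 - k) (pdx (pdy^[k] (v t))) + sobSq (2 - k) (pdy (pdy^[k] (v t)))))

lemma sobSq_nonneg (m : ℕ) (f : ℝ × ℝ → ℝ) : 0 ≤ sobSq m f :=
  Finset.sum_nonneg fun _ _ => Finset.sum_nonneg fun _ _ =>
    integral_nonneg fun _ => sq_nonneg _

lemma term_le_sobSq (m i j : ℕ) (hij : i + j ≤ m) (f : ℝ × ℝ → ℝ) :
    (∫ q in Ioi (0:ℝ) ×ˢ (univ : Set ℝ), (pdx^[i] (pdy^[j] f) q) ^ 2) ≤ sobSq m f := by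
  have hnon : ∀ i' j' : ℕ,
      0 ≤ ∫ q in Ioi (0:ℝ) ×ˢ (univ : Set ℝ), (pdx^[i'] (pdy^[j'] f) q) ^ 2 :=
    fun _ _ => integral_nonneg fun _ => sq_nonneg _
  have hi : i ∈ Finset.range (m + 1) := Finset.mem_range.mpr (by omega)
  have hj : j ∈ Finset.range (m + 1 - i) := Finset.mem_range.mpr (by omega)
  calc (∫ q in Ioi (0:ℝ) ×ˢ (univ : Set ℝ), (pdx^[i] (pdy^[j] f) q) ^ 2)
      ≤ ∑ j' ∈ Finset.range (m + 1 - i), ∫ q in Ioi (0:ℝ) ×ˢ (univ : Set ℝ),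
          (pdx^[i] (pdy^[j'] f) q) ^ 2 :=
        Finset.single_le_sum (fun j' _ => hnon i j') hj
    _ ≤ sobSq m f := by
        unfold sobSq
        exact Finset.single_le_sum
          (f := fun i' => ∑ j' ∈ Finset.range (m + 1 - i'),
            ∫ q in Ioi (0:ℝ) ×ˢ (univ : Set ℝ), (pdx^[i'] (pdy^[j'] f) q) ^ 2)
          (fun i' _ => Finset.sum_nonneg fun j' _ => hnon i' j') hi

lemma le_Dwt_sq {v : ℝ → ℝ × ℝ → ℝ} {t : ℝ} (ht : 0 ≤ t) (k : ℕ) (hk : k < 3) :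
    (1 + t) ^ k * (sobSq (2 - k) (pdx (pdy^[k] (v t))) + sobSq (2 - k) (pdy (pdy^[k] (v t))))
      ≤ Dwt v t ^ 2 := by
  have hnn : ∀ k' ∈ Finset.range 3, 0 ≤ (1 + t) ^ k' *
      (sobSq (2 - k') (pdx (pdy^[k'] (v t))) + sobSq (2 - k') (pdy (pdy^[k'] (v t)))) :=
    fun k' _ => mul_nonneg (pow_nonneg (by linarith) _)
      (add_nonneg (sobSq_nonneg _ _) (sobSq_nonneg _ _))
  unfold Dwt
  rw [Real.sq_sqrt (Finset.sum_nonneg hnn)]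
  exact Finset.single_le_sum hnn (Finset.mem_range.mpr hk)

lemma le_Ewt_sq {v : ℝ → ℝ × ℝ → ℝ} {t : ℝ} (ht : 0 ≤ t) (k : ℕ) (hk : k < 3) :
    (1 + t) ^ k * sobSq (3 - k) (pdy^[k] (v t)) ≤ Ewt v t ^ 2 := by
  have hnn : ∀ k' ∈ Finset.range 3, 0 ≤ (1 + t) ^ k' * sobSq (3 - k') (pdy^[k'] (v t)) :=
    fun k' _ => mul_nonneg (pow_nonneg (by linarith) _) (sobSq_nonneg _ _)
  unfold Ewt
  rw [Real.sq_sqrt (Finset.sum_nonneg hnn)]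
  exact Finset.single_le_sum hnn (Finset.mem_range.mpr hk)

lemma sqrt_le_of_le_sq {X Y : ℝ} (hY : 0 ≤ Y) (h : X ≤ Y ^ 2) : Real.sqrt X ≤ Y := by
  calc Real.sqrt X ≤ Real.sqrt (Y ^ 2) := Real.sqrt_le_sqrt h
    _ = Y := Real.sqrt_sq hY

/-- `L^∞` decay of `∂_y v` in terms of the weighted norms:
`‖∂_y v(t)‖_{L^∞} ≤ C D(t) (1+t)^{−1/2}` and `‖∂_y v(t)‖_{L^∞} ≤ C E(t) (1+t)^{−3/4}`. -/
theorem vy_Linfty_decay :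
    ∃ C > (0 : ℝ), ∀ T > (0 : ℝ), ∀ v : ℝ → ℝ × ℝ → ℝ,
      (∀ t, ContDiff ℝ (⊤ : ℕ∞) (v t)) →
      (∀ t ∈ Icc (0 : ℝ) T, ∀ i j : ℕ, i + j ≤ 3 →
        IntegrableOn (fun q => (pdx^[i] (pdy^[j] (v t)) q) ^ 2)
          (Ioi (0 : ℝ) ×ˢ (univ : Set ℝ))) →
      ∀ t ∈ Icc (0 : ℝ) T, ∀ q : ℝ × ℝ, 0 < q.1 →
        |pdy (v t) q| ≤ C * Dwt v t * (1 + t) ^ (-(1 : ℝ) / 2) ∧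
        |pdy (v t) q| ≤ C * Ewt v t * (1 + t) ^ (-(3 : ℝ) / 4) := by
  refine ⟨2, by norm_num, ?_⟩
  intro T hT v hv hint t ht q hq
  obtain ⟨ht0, htT⟩ := ht
  set s : ℝ := 1 + t with hsdef
  have hs0 : (0:ℝ) < s := by simp only [hsdef]; linarith
  set r : ℝ := Real.sqrt s with hrdef
  have hr0 : (0:ℝ) < r := Real.sqrt_pos.mpr hs0
  have hr2 : r ^ 2 = s := Real.sq_sqrt hs0.le
  set g : ℝ × ℝ → ℝ := pdy (v t) with hgdef
  have hgc : ContDiff ℝ (⊤ : ℕ∞) g := contDiff_pdy (hv t)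
  have e1 : pdy^[1] (v t) = g := by rw [Function.iterate_one]
  have e2 : pdy^[2] (v t) = pdy g := by
    rw [show (2:ℕ) = 1 + 1 from rfl, Function.iterate_add_apply, Function.iterate_one]
  -- integrability of the four relevant squares
  have h0 : IntegrableOn (fun q => g q ^ 2) (Ioi (0:ℝ) ×ˢ (univ : Set ℝ)) := by
    have := hint t ⟨ht0, htT⟩ 0 1 (by norm_num)
    simpa [e1] using this
  have h1 : IntegrableOn (fun q => pdx g q ^ 2) (Ioi (0:ℝ) ×ˢ (univ : Set ℝ)) := by
    have := hint t ⟨ht0, htT⟩ 1 1 (by norm_num)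
    simpa [e1] using this
  have h2 : IntegrableOn (fun q => pdy g q ^ 2) (Ioi (0:ℝ) ×ˢ (univ : Set ℝ)) := by
    have := hint t ⟨ht0, htT⟩ 0 2 (by norm_num)
    simpa [e2] using this
  have h3 : IntegrableOn (fun q => pdx (pdy g) q ^ 2) (Ioi (0:ℝ) ×ˢ (univ : Set ℝ)) := by
    have := hint t ⟨ht0, htT⟩ 1 2 (by norm_num)
    simpa [e2] using this
  set I0 : ℝ := ∫ q in Ioi (0:ℝ) ×ˢ (univ : Set ℝ), g q ^ 2 with hI0def
  set I1 : ℝ := ∫ q in Ioi (0:ℝ) ×ˢ (univ : Set ℝ), pdx g q ^ 2 with hI1def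
  set I2 : ℝ := ∫ q in Ioi (0:ℝ) ×ˢ (univ : Set ℝ), pdy g q ^ 2 with hI2def
  set I3 : ℝ := ∫ q in Ioi (0:ℝ) ×ˢ (univ : Set ℝ), pdx (pdy g) q ^ 2 with hI3def
  have hI0n : 0 ≤ I0 := integral_nonneg fun _ => sq_nonneg _
  have hI1n : 0 ≤ I1 := integral_nonneg fun _ => sq_nonneg _
  have hI2n : 0 ≤ I2 := integral_nonneg fun _ => sq_nonneg _
  have hI3n : 0 ≤ I3 := integral_nonneg fun _ => sq_nonneg _
  have hkey : g q ^ 2 ≤ 4 * Real.sqrt (Real.sqrt I0 * Real.sqrt I1)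
      * Real.sqrt (Real.sqrt I2 * Real.sqrt I3) := agmon2 hgc h0 h1 h2 h3 q hq
  set D : ℝ := Dwt v t with hDdef
  set E : ℝ := Ewt v t with hEdef
  have hDn : 0 ≤ D := Real.sqrt_nonneg _
  have hEn : 0 ≤ E := Real.sqrt_nonneg _
  -- term extraction for D
  have hD0 : I0 ≤ D ^ 2 := by
    have t1 : I0 ≤ sobSq 2 g := by
      simpa using term_le_sobSq 2 0 0 (by norm_num) g
    have t2 := le_Dwt_sq (v := v) ht0 0 (by norm_num)
    simp only [Function.iterate_zero_apply, pow_zero, one_mul] at t2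
    rw [← hgdef] at t2
    exact t1.trans ((le_add_of_nonneg_left (sobSq_nonneg _ _)).trans t2)
  have hD1 : s * I1 ≤ D ^ 2 := by
    have t1 : I1 ≤ sobSq 1 (pdx g) := by
      simpa using term_le_sobSq 1 0 0 (by norm_num) (pdx g)
    have t2 := le_Dwt_sq (v := v) ht0 1 (by norm_num)
    rw [e1, pow_one, ← hsdef] at t2
    have : I1 ≤ sobSq 1 (pdx g) + sobSq 1 (pdy g) :=
      t1.trans (le_add_of_nonneg_right (sobSq_nonneg _ _))
    exact (mul_le_mul_of_nonneg_left this hs0.le).trans t2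
  have hD2 : s * I2 ≤ D ^ 2 := by
    have t1 : I2 ≤ sobSq 1 (pdy g) := by
      simpa using term_le_sobSq 1 0 0 (by norm_num) (pdy g)
    have t2 := le_Dwt_sq (v := v) ht0 1 (by norm_num)
    rw [e1, pow_one, ← hsdef] at t2
    have h' : I2 ≤ sobSq 1 (pdx g) + sobSq 1 (pdy g) :=
      t1.trans (le_add_of_nonneg_left (sobSq_nonneg _ _))
    exact (mul_le_mul_of_nonneg_left h' hs0.le).trans t2
  have hD3 : s ^ 2 * I3 ≤ D ^ 2 := by
    have t1 : I3 ≤ sobSq 0 (pdx (pdy g)) := by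
      simpa using term_le_sobSq 0 0 0 (by norm_num) (pdx (pdy g))
    have t2 := le_Dwt_sq (v := v) ht0 2 (by norm_num)
    rw [e2, ← hsdef] at t2
    have h' : I3 ≤ sobSq 0 (pdx (pdy g)) + sobSq 0 (pdy (pdy g)) :=
      t1.trans (le_add_of_nonneg_right (sobSq_nonneg _ _))
    exact (mul_le_mul_of_nonneg_left h' (by positivity)).trans t2
  -- term extraction for E
  have hE0 : s * I0 ≤ E ^ 2 := by
    have t1 : I0 ≤ sobSq 2 g := by
      simpa using term_le_sobSq 2 0 0 (by norm_num) g
    have t2 := le_Ewt_sq (v := v) ht0 1 (by norm_num)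
    rw [e1, pow_one, ← hsdef] at t2
    exact (mul_le_mul_of_nonneg_left t1 hs0.le).trans t2
  have hE1 : s * I1 ≤ E ^ 2 := by
    have t1 : I1 ≤ sobSq 2 g := by
      simpa using term_le_sobSq 2 1 0 (by norm_num) g
    have t2 := le_Ewt_sq (v := v) ht0 1 (by norm_num)
    rw [e1, pow_one, ← hsdef] at t2
    exact (mul_le_mul_of_nonneg_left t1 hs0.le).trans t2
  have hE2 : s ^ 2 * I2 ≤ E ^ 2 := by
    have t1 : I2 ≤ sobSq 1 (pdy g) := by
      simpa using term_le_sobSq 1 0 0 (by norm_num) (pdy g)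
    have t2 := le_Ewt_sq (v := v) ht0 2 (by norm_num)
    rw [e2, ← hsdef] at t2
    exact (mul_le_mul_of_nonneg_left t1 (by positivity)).trans t2
  have hE3 : s ^ 2 * I3 ≤ E ^ 2 := by
    have t1 : I3 ≤ sobSq 1 (pdy g) := by
      simpa using term_le_sobSq 1 1 0 (by norm_num) (pdy g)
    have t2 := le_Ewt_sq (v := v) ht0 2 (by norm_num)
    rw [e2, ← hsdef] at t2
    exact (mul_le_mul_of_nonneg_left t1 (by positivity)).trans t2
  constructor
  · -- D bound
    have eD1 : Real.sqrt I0 * Real.sqrt I1 ≤ D ^ 2 / r := by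
      rw [← Real.sqrt_mul hI0n]
      refine sqrt_le_of_le_sq (div_nonneg (sq_nonneg D) hr0.le) ?_
      rw [div_pow, hr2, le_div_iff₀ hs0]
      have hm : I0 * (s * I1) ≤ D ^ 2 * D ^ 2 :=
        mul_le_mul hD0 hD1 (mul_nonneg hs0.le hI1n) (sq_nonneg D)
      calc I0 * I1 * s = I0 * (s * I1) := by ring
        _ ≤ D ^ 2 * D ^ 2 := hm
        _ = (D ^ 2) ^ 2 := by ring
    have eD2 : Real.sqrt I2 * Real.sqrt I3 ≤ D ^ 2 / (s * r) := by
      rw [← Real.sqrt_mul hI2n]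
      refine sqrt_le_of_le_sq (div_nonneg (sq_nonneg D) (mul_nonneg hs0.le hr0.le)) ?_
      rw [div_pow, mul_pow, hr2, le_div_iff₀ (by positivity)]
      have hm : (s * I2) * (s ^ 2 * I3) ≤ D ^ 2 * D ^ 2 :=
        mul_le_mul hD2 hD3 (mul_nonneg (by positivity) hI3n) (sq_nonneg D)
      calc I2 * I3 * (s ^ 2 * s) = (s * I2) * (s ^ 2 * I3) := by ring
        _ ≤ D ^ 2 * D ^ 2 := hm
        _ = (D ^ 2) ^ 2 := by ring
    have eD3 : Real.sqrt (Real.sqrt I0 * Real.sqrt I1)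
        * Real.sqrt (Real.sqrt I2 * Real.sqrt I3) ≤ D ^ 2 / s := by
      rw [← Real.sqrt_mul (mul_nonneg (Real.sqrt_nonneg _) (Real.sqrt_nonneg _))]
      refine sqrt_le_of_le_sq (div_nonneg (sq_nonneg D) hs0.le) ?_
      have hle : Real.sqrt I0 * Real.sqrt I1 * (Real.sqrt I2 * Real.sqrt I3)
          ≤ (D ^ 2 / r) * (D ^ 2 / (s * r)) :=
        mul_le_mul eD1 eD2 (mul_nonneg (Real.sqrt_nonneg _) (Real.sqrt_nonneg _))
          (div_nonneg (sq_nonneg D) hr0.le)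
      refine hle.trans (le_of_eq ?_)
      have hrr : r * (s * r) = s * s := by
        calc r * (s * r) = r ^ 2 * s := by ring
          _ = s * s := by rw [hr2]
      rw [div_mul_div_comm, hrr, div_pow, ← pow_two, ← pow_two]
    have hfin : g q ^ 2 ≤ 4 * (D ^ 2 / s) := by
      calc g q ^ 2 ≤ 4 * (Real.sqrt (Real.sqrt I0 * Real.sqrt I1)
            * Real.sqrt (Real.sqrt I2 * Real.sqrt I3)) := by
            rw [← mul_assoc]; exact hkey
        _ ≤ 4 * (D ^ 2 / s) := mul_le_mul_of_nonneg_left eD3 (by norm_num)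
    have hrpow : s ^ (-(1:ℝ)/2) = 1 / r := by
      rw [show (-(1:ℝ)/2) = -(1/2) by norm_num, Real.rpow_neg hs0.le,
        ← Real.sqrt_eq_rpow, ← hrdef, one_div]
    have hrhs : (2 * D * s ^ (-(1:ℝ)/2)) ^ 2 = 4 * (D ^ 2 / s) := by
      rw [hrpow]
      have h1r : (1 / r) ^ 2 = 1 / s := by rw [div_pow, one_pow, hr2]
      calc (2 * D * (1 / r)) ^ 2 = 4 * D ^ 2 * (1 / r) ^ 2 := by ring
        _ = 4 * (D ^ 2 / s) := by rw [h1r]; ring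
    have hrhsnn : 0 ≤ 2 * D * s ^ (-(1:ℝ)/2) :=
      mul_nonneg (by linarith) (Real.rpow_nonneg hs0.le _)
    calc |g q| = Real.sqrt (g q ^ 2) := (Real.sqrt_sq_eq_abs _).symm
      _ ≤ Real.sqrt ((2 * D * s ^ (-(1:ℝ)/2)) ^ 2) := by
          refine Real.sqrt_le_sqrt ?_
          rw [hrhs]; exact hfin
      _ = 2 * D * s ^ (-(1:ℝ)/2) := Real.sqrt_sq hrhsnn
  · -- E bound
    have eE1 : Real.sqrt I0 * Real.sqrt I1 ≤ E ^ 2 / s := by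
      rw [← Real.sqrt_mul hI0n]
      refine sqrt_le_of_le_sq (div_nonneg (sq_nonneg E) hs0.le) ?_
      rw [div_pow, le_div_iff₀ (by positivity)]
      have hm : (s * I0) * (s * I1) ≤ E ^ 2 * E ^ 2 :=
        mul_le_mul hE0 hE1 (mul_nonneg hs0.le hI1n) (sq_nonneg E)
      calc I0 * I1 * s ^ 2 = (s * I0) * (s * I1) := by ring
        _ ≤ E ^ 2 * E ^ 2 := hm
        _ = (E ^ 2) ^ 2 := by ring
    have eE2 : Real.sqrt I2 * Real.sqrt I3 ≤ E ^ 2 / s ^ 2 := by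
      rw [← Real.sqrt_mul hI2n]
      refine sqrt_le_of_le_sq (div_nonneg (sq_nonneg E) (by positivity)) ?_
      rw [div_pow, le_div_iff₀ (by positivity)]
      have hm : (s ^ 2 * I2) * (s ^ 2 * I3) ≤ E ^ 2 * E ^ 2 :=
        mul_le_mul hE2 hE3 (mul_nonneg (by positivity) hI3n) (sq_nonneg E)
      calc I2 * I3 * (s ^ 2) ^ 2 = (s ^ 2 * I2) * (s ^ 2 * I3) := by ring
        _ ≤ E ^ 2 * E ^ 2 := hm
        _ = (E ^ 2) ^ 2 := by ring
    have eE3 : Real.sqrt (Real.sqrt I0 * Real.sqrt I1)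
        * Real.sqrt (Real.sqrt I2 * Real.sqrt I3) ≤ E ^ 2 / (s * r) := by
      rw [← Real.sqrt_mul (mul_nonneg (Real.sqrt_nonneg _) (Real.sqrt_nonneg _))]
      refine sqrt_le_of_le_sq (div_nonneg (sq_nonneg E) (mul_nonneg hs0.le hr0.le)) ?_
      have hle : Real.sqrt I0 * Real.sqrt I1 * (Real.sqrt I2 * Real.sqrt I3)
          ≤ (E ^ 2 / s) * (E ^ 2 / s ^ 2) :=
        mul_le_mul eE1 eE2 (mul_nonneg (Real.sqrt_nonneg _) (Real.sqrt_nonneg _))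
          (div_nonneg (sq_nonneg E) hs0.le)
      refine hle.trans (le_of_eq ?_)
      have hrr : (s * r) ^ 2 = s * s ^ 2 := by
        calc (s * r) ^ 2 = s ^ 2 * r ^ 2 := by ring
          _ = s * s ^ 2 := by rw [hr2]; ring
      rw [div_mul_div_comm, div_pow, hrr, ← pow_two]
    have hfin : g q ^ 2 ≤ 4 * (E ^ 2 / (s * r)) := by
      calc g q ^ 2 ≤ 4 * (Real.sqrt (Real.sqrt I0 * Real.sqrt I1)
            * Real.sqrt (Real.sqrt I2 * Real.sqrt I3)) := by
            rw [← mul_assoc]; exact hkey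
        _ ≤ 4 * (E ^ 2 / (s * r)) := mul_le_mul_of_nonneg_left eE3 (by norm_num)
    have hrpow : (s ^ (-(3:ℝ)/4)) ^ 2 = 1 / (s * r) := by
      rw [← Real.rpow_natCast (s ^ (-(3:ℝ)/4)) 2, ← Real.rpow_mul hs0.le]
      rw [show (-(3:ℝ)/4 * ((2:ℕ):ℝ)) = -(3/2 : ℝ) by push_cast; ring]
      rw [Real.rpow_neg hs0.le,
        show (3/2 : ℝ) = 1 + 1/2 by norm_num, Real.rpow_add hs0, Real.rpow_one,
        ← Real.sqrt_eq_rpow, ← hrdef, one_div]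
    have hrhs : (2 * E * s ^ (-(3:ℝ)/4)) ^ 2 = 4 * (E ^ 2 / (s * r)) := by
      calc (2 * E * s ^ (-(3:ℝ)/4)) ^ 2 = 4 * E ^ 2 * (s ^ (-(3:ℝ)/4)) ^ 2 := by ring
        _ = 4 * (E ^ 2 / (s * r)) := by rw [hrpow]; ring
    have hrhsnn : 0 ≤ 2 * E * s ^ (-(3:ℝ)/4) :=
      mul_nonneg (by linarith) (Real.rpow_nonneg hs0.le _)
    calc |g q| = Real.sqrt (g q ^ 2) := (Real.sqrt_sq_eq_abs _).symm
      _ ≤ Real.sqrt ((2 * E * s ^ (-(3:ℝ)/4)) ^ 2) := by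
          refine Real.sqrt_le_sqrt ?_
          rw [hrhs]; exact hfin
      _ = 2 * E * s ^ (-(3:ℝ)/4) := Real.sqrt_sq hrhsnn
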